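/- The associated graded algebra of U_ω(L) (with respect to the canonical filtration) is ε-commutative: for all homogeneous elements a,b of the associated graded algebra, ab = ε(|a|,|b|)ba. -/

import Mathlib

open TensorAlgebra

/-- An antisymmetric bicharacter `ε : G × G → K` on an abelian group `G`. -/
structure ColorStructure (G K : Type*) [CommGroup G] [Field K] where
  ε : G → G → K
  antisym : ∀ g h, ε g h * ε h g = 1
  mul_right : ∀ g h k, ε g (h * k) = ε g h * ε g k
  mul_left : ∀ g h k, ε (g * h) k = ε g k * ε h k

/-- A `G`-graded `ε`-Lie algebra (color Lie algebra) structure on a `K`-vector space `V`. -/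
structure ColorLieAlgebra {G K : Type*} [CommGroup G] [DecidableEq G] [Field K]
    (χ : ColorStructure G K) (V : Type*) [AddCommGroup V] [Module K V] where
  grading : G → Submodule K V
  decomp : DirectSum.IsInternal grading
  bracket : V →ₗ[K] V →ₗ[K] V
  bracket_grade : ∀ g h : G, ∀ a ∈ grading g, ∀ b ∈ grading h,
    bracket a b ∈ grading (g * h)
  bracket_antisym : ∀ g h : G, ∀ a ∈ grading g, ∀ b ∈ grading h,
    bracket a b = -(χ.ε g h • bracket b a)
  jacobi : ∀ g h k : G, ∀ a ∈ grading g, ∀ b ∈ grading h, ∀ c ∈ grading k,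
    χ.ε k g • bracket a (bracket b c) + χ.ε g h • bracket b (bracket c a)
      + χ.ε h k • bracket c (bracket a b) = 0

/-- A scalar graded 2-cocycle of degree zero on a color Lie algebra,
with values in `K` regarded as a trivial graded `L`-module. -/
structure ColorCocycle {G K : Type*} [CommGroup G] [DecidableEq G] [Field K]
    {χ : ColorStructure G K} {V : Type*} [AddCommGroup V] [Module K V]
    (L : ColorLieAlgebra χ V) where
  ω : V →ₗ[K] V →ₗ[K] K
  antisym : ∀ g h : G, ∀ a ∈ L.grading g, ∀ b ∈ L.grading h,
    ω a b = -(χ.ε g h * ω b a)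
  cocycle : ∀ g h k : G, ∀ a ∈ L.grading g, ∀ b ∈ L.grading h, ∀ c ∈ L.grading k,
    χ.ε k g * ω a (L.bracket b c) + χ.ε g h * ω b (L.bracket c a)
      + χ.ε h k * ω c (L.bracket a b) = 0
  degree_zero : ∀ g h : G, g * h ≠ 1 → ∀ a ∈ L.grading g, ∀ b ∈ L.grading h, ω a b = 0

variable {G K V : Type*} [CommGroup G] [DecidableEq G] [Field K] [AddCommGroup V] [Module K V]
  {χ : ColorStructure G K}

/-- The defining relations of the generalized enveloping algebra `U_ω(L)`. -/
inductive URel (L : ColorLieAlgebra χ V) (c : ColorCocycle L) :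
    TensorAlgebra K V → TensorAlgebra K V → Prop
  | rel {g h : G} {a b : V} (ha : a ∈ L.grading g) (hb : b ∈ L.grading h) :
      URel L c (ι K a * ι K b)
        (χ.ε g h • (ι K b * ι K a) + ι K (L.bracket a b)
          + algebraMap K (TensorAlgebra K V) (c.ω a b))

/-- The generalized enveloping algebra `U_ω(L)`: the quotient of the tensor algebra `T(L)`
by the two-sided ideal generated by the elements
`v₁ ⊗ v₂ - ε(|v₁|,|v₂|) v₂ ⊗ v₁ - [v₁,v₂] - ω(v₁,v₂)` for homogeneous `v₁, v₂`. -/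
def Uenv (L : ColorLieAlgebra χ V) (c : ColorCocycle L) : Type _ :=
  RingQuot (URel L c)

noncomputable instance (L : ColorLieAlgebra χ V) (c : ColorCocycle L) : Ring (Uenv L c) :=
  inferInstanceAs (Ring (RingQuot (URel L c)))

noncomputable instance (L : ColorLieAlgebra χ V) (c : ColorCocycle L) :
    Algebra K (Uenv L c) :=
  inferInstanceAs (Algebra K (RingQuot (URel L c)))

/-- The canonical map `i_ω : L → U_ω(L)`. -/
noncomputable def Uι (L : ColorLieAlgebra χ V) (c : ColorCocycle L) : V →ₗ[K] Uenv L c :=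
  (RingQuot.mkAlgHom K (URel L c)).toLinearMap ∘ₗ ι K

/-- The canonical positive filtration on `U_ω(L)`: `Ufil L c n` is the span of products of
at most `n` images of elements of `L` (the image of `T_n(L)`). -/
noncomputable def Ufil (L : ColorLieAlgebra χ V) (c : ColorCocycle L) (n : ℕ) :
    Submodule K (Uenv L c) :=
  Submodule.span K {u | ∃ l : List V, l.length ≤ n ∧ u = (l.map (Uι L c)).prod}

/-- `Ulow L c n` is `Ufil L c (n-1)`, with the convention `Ufil L c (-1) = ⊥`. -/
noncomputable def Ulow (L : ColorLieAlgebra χ V) (c : ColorCocycle L) :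
    ℕ → Submodule K (Uenv L c)
  | 0 => ⊥
  | n + 1 => Ufil L c n

/-- The `G`-grading of `U_ω(L)`: the `g`-component is spanned by products of images of
homogeneous elements whose degrees multiply to `g`. -/
noncomputable def Ugrading (L : ColorLieAlgebra χ V) (c : ColorCocycle L) (g : G) :
    Submodule K (Uenv L c) :=
  Submodule.span K {u | ∃ l : List (G × V), (∀ p ∈ l, p.2 ∈ L.grading p.1) ∧
    (l.map Prod.fst).prod = g ∧ u = (l.map fun p => Uι L c p.2).prod}


/-!
Since `ω(a, b)` vanishes unless `|a| |b| = 1`, the defining relations of `U_ω(L)` are homogeneous,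
so `a ↦ a ⊗ |a|` on homogeneous `a` extends to an algebra map `U_ω(L) → U_ω(L)[G]`. Its
`g`-coefficient shows that an element of `F_m ∩ U_g` is a combination of products of at most `m`
homogeneous generators of total degree `g`. For two generators the defining relation gives
`[a, b]_ε = [a, b] + ω(a, b) ∈ F_1`, where `[x, y]_ε = x y - ε(|x|, |y|) y x`; the `ε`-Leibniz
rules push this through products, so `[x, y]_ε ∈ F_{m+n-1}` for such products of lengths `m` and
`n`, and by bilinearity for all of `F_m ∩ U_g` and `F_n ∩ U_h`.
-/

namespace ColorStructure

variable {Γ F : Type*} [CommGroup Γ] [Field F] (χ : ColorStructure Γ F)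

theorem ε_ne_zero (g h : Γ) : χ.ε g h ≠ 0 :=
  left_ne_zero_of_mul_eq_one (χ.antisym g h)

theorem ε_one_left (h : Γ) : χ.ε 1 h = 1 := by
  have := χ.mul_left 1 1 h
  rw [one_mul] at this
  exact (mul_eq_left₀ (χ.ε_ne_zero 1 h)).1 this.symm

theorem ε_one_right (g : Γ) : χ.ε g 1 = 1 := by
  have := χ.mul_right g 1 1
  rw [one_mul] at this
  exact (mul_eq_left₀ (χ.ε_ne_zero g 1)).1 this.symm

variable (A : Type*) [Ring A] [Algebra F A]

def commutator (g h : Γ) : A →ₗ[F] A →ₗ[F] A :=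
  LinearMap.mul F A - χ.ε g h • (LinearMap.mul F A).flip

variable {A}

@[simp]
theorem commutator_apply (g h : Γ) (x y : A) :
    χ.commutator A g h x y = x * y - χ.ε g h • (y * x) := rfl

theorem commutator_mul_right (g h k : Γ) (x y z : A) :
    χ.commutator A g (h * k) x (y * z) =
      χ.commutator A g h x y * z + χ.ε g h • (y * χ.commutator A g k x z) := by
  simp only [commutator_apply, χ.mul_right, mul_sub, sub_mul, mul_smul_comm, smul_mul_assoc,
    smul_sub, smul_smul, mul_assoc]
  abel

theorem commutator_mul_left (g h k : Γ) (x y z : A) :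
    χ.commutator A (g * h) k (x * y) z =
      x * χ.commutator A h k y z + χ.ε h k • (χ.commutator A g k x z * y) := by
  simp only [commutator_apply, χ.mul_left, mul_sub, sub_mul, mul_smul_comm, smul_mul_assoc,
    smul_sub, smul_smul, mul_assoc, mul_comm (χ.ε g k)]
  abel

end ColorStructure

namespace Uenv

variable (L : ColorLieAlgebra χ V) (c : ColorCocycle L)

noncomputable def prodι (l : List (G × V)) : Uenv L c :=
  (l.map fun p => Uι L c p.2).prod

variable {L c}

theorem Uι_mul_Uι {g h : G} {a b : V} (ha : a ∈ L.grading g) (hb : b ∈ L.grading h) :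
    Uι L c a * Uι L c b = χ.ε g h • (Uι L c b * Uι L c a) + Uι L c (L.bracket a b)
      + algebraMap K (Uenv L c) (c.ω a b) := by
  have hrel := RingQuot.mkAlgHom_rel K (URel.rel ha hb : URel L c _ _)
  simp only [map_mul, map_add, map_smul, AlgHom.commutes] at hrel
  exact hrel

theorem prodι_nil : prodι L c [] = 1 := rfl

theorem prodι_cons (p : G × V) (l : List (G × V)) :
    prodι L c (p :: l) = Uι L c p.2 * prodι L c l := rfl

theorem prodι_append (l₁ l₂ : List (G × V)) :
    prodι L c (l₁ ++ l₂) = prodι L c l₁ * prodι L c l₂ := by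
  simp [prodι]

variable (L c) in
theorem Ufil_mono : Monotone (Ufil L c) :=
  fun _ _ hmn => Submodule.span_mono fun _ ⟨l, hl, hu⟩ => ⟨l, hl.trans hmn, hu⟩

theorem Ufil_mul {m n : ℕ} {x y : Uenv L c} (hx : x ∈ Ufil L c m) (hy : y ∈ Ufil L c n) :
    x * y ∈ Ufil L c (m + n) := by
  have hxy := Submodule.mul_mem_mul hx hy
  rw [Ufil, Ufil, Submodule.span_mul_span] at hxy
  refine Submodule.span_mono ?_ hxy
  rintro _ ⟨_, ⟨l₁, hl₁, rfl⟩, _, ⟨l₂, hl₂, rfl⟩, rfl⟩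
  exact ⟨l₁ ++ l₂, by simp only [List.length_append]; omega, by simp⟩

theorem one_mem_Ufil (m : ℕ) : (1 : Uenv L c) ∈ Ufil L c m :=
  Submodule.subset_span ⟨[], Nat.zero_le m, rfl⟩

theorem Uι_mem_Ufil (v : V) : Uι L c v ∈ Ufil L c 1 :=
  Submodule.subset_span ⟨[v], le_rfl, by simp⟩

theorem prodι_mem_Ufil (l : List (G × V)) : prodι L c l ∈ Ufil L c l.length :=
  Submodule.subset_span ⟨l.map Prod.snd, by simp, by rw [List.map_map]; rfl⟩

variable (L c) in
theorem Ulow_mono : Monotone (Ulow L c)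
  | 0, _, _ => bot_le
  | _ + 1, _ + 1, hmn => Ufil_mono L c (Nat.le_of_succ_le_succ hmn)

theorem Ufil_mul_Ulow {m n : ℕ} {x y : Uenv L c} (hx : x ∈ Ufil L c m) (hy : y ∈ Ulow L c n) :
    x * y ∈ Ulow L c (m + n) := by
  cases n with
  | zero => simp_all [Ulow]
  | succ n => exact Ufil_mul hx hy

theorem Ulow_mul_Ufil {m n : ℕ} {x y : Uenv L c} (hx : x ∈ Ulow L c m) (hy : y ∈ Ufil L c n) :
    x * y ∈ Ulow L c (m + n) := by
  cases m with
  | zero => simp_all [Ulow]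
  | succ m =>
    rw [Nat.add_right_comm]
    exact Ufil_mul hx hy

theorem commutator_Uι_Uι_mem {g h : G} {a b : V} (ha : a ∈ L.grading g)
    (hb : b ∈ L.grading h) : χ.commutator _ g h (Uι L c a) (Uι L c b) ∈ Ufil L c 1 := by
  rw [χ.commutator_apply, Uι_mul_Uι ha hb, add_assoc, add_sub_cancel_left,
    Algebra.algebraMap_eq_smul_one]
  exact add_mem (Uι_mem_Ufil _) (Submodule.smul_mem _ _ (one_mem_Ufil 1))

theorem commutator_prodι_Uι_mem {h : G} {w : V} (hw : w ∈ L.grading h) :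
    ∀ l : List (G × V), (∀ p ∈ l, p.2 ∈ L.grading p.1) →
      χ.commutator _ (l.map Prod.fst).prod h (prodι L c l) (Uι L c w) ∈ Ulow L c (l.length + 1)
  | [], _ => by simp [prodι_nil, χ.ε_one_left]
  | p :: l, hl => by
    rw [List.map_cons, List.prod_cons, prodι_cons, χ.commutator_mul_left]
    have hrest := commutator_prodι_Uι_mem hw l fun q hq => hl q (List.mem_cons_of_mem p hq)
    have hhead := commutator_Uι_Uι_mem (c := c) (hl p List.mem_cons_self) hw
    refine add_mem ?_ (Submodule.smul_mem _ _ ?_)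
    · exact Ulow_mono L c (by simp only [List.length_cons]; omega)
        (Ufil_mul_Ulow (Uι_mem_Ufil p.2) hrest)
    · exact Ulow_mono L c (by simp only [List.length_cons]; omega)
        (Ulow_mul_Ufil (m := 2) hhead (prodι_mem_Ufil l))

theorem commutator_prodι_prodι_mem {l₁ : List (G × V)} (hl₁ : ∀ p ∈ l₁, p.2 ∈ L.grading p.1) :
    ∀ l₂ : List (G × V), (∀ p ∈ l₂, p.2 ∈ L.grading p.1) →
      χ.commutator _ (l₁.map Prod.fst).prod (l₂.map Prod.fst).prod (prodι L c l₁) (prodι L c l₂)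
        ∈ Ulow L c (l₁.length + l₂.length)
  | [], _ => by simp [prodι_nil, χ.ε_one_right]
  | q :: l, hl => by
    rw [List.map_cons, List.prod_cons, prodι_cons, χ.commutator_mul_right]
    have hrest := commutator_prodι_prodι_mem hl₁ l fun p hp => hl p (List.mem_cons_of_mem q hp)
    have hhead := commutator_prodι_Uι_mem (c := c) (hl q List.mem_cons_self) l₁ hl₁
    refine add_mem ?_ (Submodule.smul_mem _ _ ?_)
    · exact Ulow_mono L c (by simp only [List.length_cons]; omega)
        (Ulow_mul_Ufil hhead (prodι_mem_Ufil l))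
    · exact Ulow_mono L c (by simp only [List.length_cons]; omega)
        (Ufil_mul_Ulow (Uι_mem_Ufil q.2) hrest)

variable (L c)

noncomputable def gradedι : V →ₗ[K] MonoidAlgebra (Uenv L c) G :=
  DirectSum.toModule K G _ (fun g => MonoidAlgebra.lsingle g ∘ₗ Uι L c ∘ₗ (L.grading g).subtype)
    ∘ₗ (LinearEquiv.ofBijective (DirectSum.coeLinearMap L.grading) L.decomp).symm.toLinearMap

variable {L c}

theorem gradedι_of_mem {g : G} {a : V} (ha : a ∈ L.grading g) :
    gradedι L c a = MonoidAlgebra.single g (Uι L c a) := by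
  have hdecomp : (LinearEquiv.ofBijective (DirectSum.coeLinearMap L.grading) L.decomp).symm a =
      DirectSum.lof K G (fun g => L.grading g) g ⟨a, ha⟩ := by
    rw [LinearEquiv.symm_apply_eq]
    exact (DirectSum.coeLinearMap_of L.grading g ⟨a, ha⟩).symm
  simp [gradedι, hdecomp]

theorem lift_gradedι_eq_of_URel ⦃x y : TensorAlgebra K V⦄ (hxy : URel L c x y) :
    TensorAlgebra.lift K (gradedι L c) x = TensorAlgebra.lift K (gradedι L c) y := by
  obtain @⟨g, h, a, b, ha, hb⟩ := hxy
  have hω : MonoidAlgebra.single (g * h) (algebraMap K (Uenv L c) (c.ω a b)) =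
      algebraMap K (MonoidAlgebra (Uenv L c) G) (c.ω a b) := by
    by_cases hgh : g * h = 1
    · rw [hgh, MonoidAlgebra.coe_algebraMap, Function.comp_apply]
    · simp [c.degree_zero g h hgh a ha b hb]
  simp only [map_mul, map_add, map_smul, TensorAlgebra.lift_ι_apply, AlgHom.commutes,
    gradedι_of_mem ha, gradedι_of_mem hb, gradedι_of_mem (L.bracket_grade g h a ha b hb),
    MonoidAlgebra.single_mul_single]
  rw [Uι_mul_Uι ha hb, MonoidAlgebra.single_add, MonoidAlgebra.single_add,
    ← MonoidAlgebra.smul_single, mul_comm h g, hω]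

variable (L c) in
noncomputable def coaction : Uenv L c →ₐ[K] MonoidAlgebra (Uenv L c) G :=
  RingQuot.liftAlgHom K ⟨TensorAlgebra.lift K (gradedι L c), lift_gradedι_eq_of_URel⟩

theorem coaction_Uι (v : V) : coaction L c (Uι L c v) = gradedι L c v :=
  (RingQuot.liftAlgHom_mkAlgHom_apply K _ _ _).trans (TensorAlgebra.lift_ι_apply _ _)

theorem coaction_prodι {l : List (G × V)} (hl : ∀ p ∈ l, p.2 ∈ L.grading p.1) :
    coaction L c (prodι L c l) = MonoidAlgebra.single (l.map Prod.fst).prod (prodι L c l) := by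
  induction l with
  | nil => simp [prodι_nil, MonoidAlgebra.one_def]
  | cons p l ih =>
    rw [prodι_cons, map_mul, coaction_Uι, gradedι_of_mem (hl p List.mem_cons_self),
      ih fun q hq => hl q (List.mem_cons_of_mem p hq), MonoidAlgebra.single_mul_single,
      List.map_cons, List.prod_cons]

theorem coaction_of_mem_Ugrading {g : G} {u : Uenv L c} (hu : u ∈ Ugrading L c g) :
    coaction L c u = MonoidAlgebra.single g u := by
  induction hu using Submodule.span_induction with
  | mem x hx =>
    obtain ⟨l, hl, rfl, rfl⟩ := hx
    exact coaction_prodι hl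
  | zero => simp
  | add x y _ _ hx hy => rw [map_add, hx, hy, MonoidAlgebra.single_add]
  | smul k x _ hx => rw [map_smul, hx, MonoidAlgebra.smul_single]

variable (L c)

noncomputable def homogFil (m : ℕ) (g : G) : Submodule K (Uenv L c) :=
  Submodule.span K {u | ∃ l : List (G × V), (∀ p ∈ l, p.2 ∈ L.grading p.1) ∧ l.length ≤ m ∧
    (l.map Prod.fst).prod = g ∧ u = prodι L c l}

noncomputable def coactionFil (m : ℕ) : Submodule K (MonoidAlgebra (Uenv L c) G) :=
  Submodule.span K {x | ∃ l : List (G × V), (∀ p ∈ l, p.2 ∈ L.grading p.1) ∧ l.length ≤ m ∧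
    x = MonoidAlgebra.single (l.map Prod.fst).prod (prodι L c l)}

theorem coactionFil_mono : Monotone (coactionFil L c) :=
  fun _ _ hmn => Submodule.span_mono fun _ ⟨l, hl, hlen, hx⟩ => ⟨l, hl, hlen.trans hmn, hx⟩

variable {L c}

theorem coactionFil_mul {m n : ℕ} {x y : MonoidAlgebra (Uenv L c) G}
    (hx : x ∈ coactionFil L c m) (hy : y ∈ coactionFil L c n) :
    x * y ∈ coactionFil L c (m + n) := by
  have hxy := Submodule.mul_mem_mul hx hy
  rw [coactionFil, coactionFil, Submodule.span_mul_span] at hxy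
  refine Submodule.span_mono ?_ hxy
  rintro _ ⟨_, ⟨l₁, hl₁, hlen₁, rfl⟩, _, ⟨l₂, hl₂, hlen₂, rfl⟩, rfl⟩
  refine ⟨l₁ ++ l₂, ?_, by simp only [List.length_append]; omega, ?_⟩
  · simpa [or_imp, forall_and] using And.intro hl₁ hl₂
  · simp [MonoidAlgebra.single_mul_single, prodι_append]

theorem gradedι_mem_coactionFil (v : V) : gradedι L c v ∈ coactionFil L c 1 := by
  refine Submodule.iSup_induction (motive := fun v => gradedι L c v ∈ coactionFil L c 1)
    L.grading (L.decomp.submodule_iSup_eq_top ▸ Submodule.mem_top) ?_ ?_ ?_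
  · intro g a ha
    rw [gradedι_of_mem ha]
    exact Submodule.subset_span ⟨[(g, a)], by simpa using ha, le_rfl, by simp [prodι]⟩
  · simp
  · intro x y hx hy
    simpa using add_mem hx hy

theorem coaction_list_prod_mem_coactionFil (l : List V) :
    coaction L c (l.map (Uι L c)).prod ∈ coactionFil L c l.length := by
  induction l with
  | nil =>
    exact Submodule.subset_span ⟨[], by simp, le_rfl, by simp [prodι_nil, MonoidAlgebra.one_def]⟩
  | cons v l ih =>
    rw [List.map_cons, List.prod_cons, map_mul, coaction_Uι, List.length_cons, add_comm]
    exact coactionFil_mul (gradedι_mem_coactionFil v) ih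

theorem coaction_mem_coactionFil {m : ℕ} {u : Uenv L c} (hu : u ∈ Ufil L c m) :
    coaction L c u ∈ coactionFil L c m := by
  refine (Submodule.span_le (p := (coactionFil L c m).comap (coaction L c).toLinearMap)).2 ?_ hu
  rintro _ ⟨l, hlen, rfl⟩
  exact coactionFil_mono L c hlen (coaction_list_prod_mem_coactionFil l)

theorem coeff_mem_homogFil {m : ℕ} {x : MonoidAlgebra (Uenv L c) G} (hx : x ∈ coactionFil L c m)
    (g : G) : x.coeff g ∈ homogFil L c m g := by
  induction hx using Submodule.span_induction with
  | mem y hy =>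
    obtain ⟨l, hl, hlen, rfl⟩ := hy
    rw [MonoidAlgebra.coeff_single, Finsupp.single_apply]
    split_ifs with hg
    · exact Submodule.subset_span ⟨l, hl, hlen, hg, rfl⟩
    · exact zero_mem _
  | zero => exact zero_mem _
  | add x y _ _ hx hy => simpa using add_mem hx hy
  | smul k x _ hx => simpa using Submodule.smul_mem _ k hx

theorem mem_homogFil_of_mem_inf {m : ℕ} {g : G} {a : Uenv L c}
    (ha : a ∈ Ufil L c m ⊓ Ugrading L c g) : a ∈ homogFil L c m g := by
  have h := coeff_mem_homogFil (coaction_mem_coactionFil ha.1) g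
  rwa [coaction_of_mem_Ugrading ha.2, MonoidAlgebra.coeff_single, Finsupp.single_eq_same] at h

theorem commutator_mem_Ulow_of_mem_homogFil {m n : ℕ} {g h : G} {a b : Uenv L c}
    (ha : a ∈ homogFil L c m g) (hb : b ∈ homogFil L c n h) :
    χ.commutator _ g h a b ∈ Ulow L c (m + n) := by
  have hab := Submodule.apply_mem_map₂ (χ.commutator _ g h) ha hb
  rw [homogFil, homogFil, Submodule.map₂_span_span] at hab
  refine (Submodule.span_le.2 ?_) hab
  rintro _ ⟨_, ⟨l₁, hl₁, hlen₁, rfl, rfl⟩, _, ⟨l₂, hl₂, hlen₂, rfl, rfl⟩, rfl⟩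
  exact Ulow_mono L c (Nat.add_le_add hlen₁ hlen₂) (commutator_prodι_prodι_mem hl₁ l₂ hl₂)

end Uenv

theorem associated_graded_eps_commutative_general
    (L : ColorLieAlgebra χ V) (c : ColorCocycle L) :
    ∀ (m n : ℕ) (g h : G), ∀ a ∈ Ufil L c m ⊓ Ugrading L c g,
      ∀ b ∈ Ufil L c n ⊓ Ugrading L c h,
      a * b - χ.ε g h • (b * a) ∈ Ulow L c (m + n) :=
  fun _ _ _ _ _ ha _ hb => Uenv.commutator_mem_Ulow_of_mem_homogFil
    (Uenv.mem_homogFil_of_mem_inf ha) (Uenv.mem_homogFil_of_mem_inf hb)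

/-- the associated graded algebra of `U_ω(L)` is `ε`-commutative: for
homogeneous `a` of filtration degree `m` and `G`-degree `g`, and `b` of filtration degree
`n` and `G`-degree `h`, the element `a*b - ε(g,h) • (b*a)` lies in filtration degree
`m + n - 1`, i.e. the classes in the associated graded algebra satisfy `ab = ε(g,h) ba`. -/
theorem associated_graded_eps_commutative [CharZero K]
    (L : ColorLieAlgebra χ V) (c : ColorCocycle L) :
    ∀ (m n : ℕ) (g h : G), ∀ a ∈ Ufil L c m ⊓ Ugrading L c g,
      ∀ b ∈ Ufil L c n ⊓ Ugrading L c h,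
      a * b - χ.ε g h • (b * a) ∈ Ulow L c (m + n) :=
  associated_graded_eps_commutative_general L c
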